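/- arXiv:2209.00430 — 3 statements merged into one kernel-verified Lean document; each statement's English description precedes it below -/
import Mathlib

section
/- Let g ∈ ℝ² be the GBS horizontal location and let R(u) = B · log₂(1 + γ / (‖u − g‖² + H²)) be the achievable rate function with B > 0, γ > 0, H > 0. Fix a maximum speed V_max > 0 and points a, b ∈ ℝ². For every T ≥ 0 and every map u : ℝ → ℝ² that is V_max-Lipschitz on the interval [0, T] with u(0) = a and u(T) = b, there exists a map u' : ℝ → ℝ² that is V_max-Lipschitz on [0, T], satisfies u'(0) = a and u'(T) = b, whose image u'(t) for every t ∈ [0, T] lies in the convex hull of the three points {a, g, b}, and which transmits at least as much information: ∫₀ᵀ R(u'(t)) dt ≥ ∫₀ᵀ R(u(t)) dt. (This is the content of Proposition 1: the horizontal path of an optimal UAV trajectory for the per-stage subproblem must lie within the triangle with vertices a, g, b.) -/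
/-- The Euclidean plane. -/
local notation "E" => EuclideanSpace ℝ (Fin 2)

/-- The achievable rate when the UAV is at horizontal position `u`, with GBS at `g`,
bandwidth `B`, reference SNR `γ`, and altitude difference `H`. -/
noncomputable def rate (B γ H : ℝ) (g u : EuclideanSpace ℝ (Fin 2)) : ℝ :=
  B * Real.logb 2 (1 + γ / (‖u - g‖ ^ 2 + H ^ 2))

/-- Metric projection onto a nonempty closed convex subset of the plane: it maps into the
set, fixes its points, and is nonexpansive. -/
lemma exists_proj_map (K : Set (EuclideanSpace ℝ (Fin 2))) (hK : Convex ℝ K)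
    (hc : IsClosed K) (hne : K.Nonempty) :
    ∃ P : EuclideanSpace ℝ (Fin 2) → EuclideanSpace ℝ (Fin 2),
      (∀ x, P x ∈ K) ∧ (∀ x ∈ K, P x = x) ∧ LipschitzWith 1 P := by
  have hproj : ∀ x : E, ∃ v ∈ K, ∀ w ∈ K, inner ℝ (x - v) (w - v) ≤ (0:ℝ) := by
    intro x
    obtain ⟨v, hv, heq⟩ := exists_norm_eq_iInf_of_complete_convex hne hc.isComplete hK x
    exact ⟨v, hv, (norm_eq_iInf_iff_real_inner_le_zero hK hv).1 heq⟩
  choose P hPmem hPvar using hproj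
  have hfix : ∀ x ∈ K, P x = x := by
    intro x hx
    have h := hPvar x x hx
    have h2 : (0:ℝ) ≤ inner ℝ (x - P x) (x - P x) := real_inner_self_nonneg
    have h3 : inner ℝ (x - P x) (x - P x) = (0:ℝ) := le_antisymm h h2
    have h4 : x - P x = 0 := by simpa using inner_self_eq_zero (𝕜 := ℝ).1 h3
    exact (sub_eq_zero.1 h4).symm
  refine ⟨P, hPmem, hfix, ?_⟩
  apply LipschitzWith.of_dist_le_mul
  intro x y
  simp only [NNReal.coe_one, one_mul, dist_eq_norm]
  have h1 := hPvar x (P y) (hPmem y)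
  have h2 := hPvar y (P x) (hPmem x)
  have key : ‖P x - P y‖ ^ 2 ≤ inner ℝ (x - y) (P x - P y) := by
    have decomp : x - y = (x - P x) + (P x - P y) + (P y - y) := by abel
    rw [decomp, inner_add_left, inner_add_left]
    have a1 : (inner ℝ (x - P x) (P x - P y) : ℝ) = - inner ℝ (x - P x) (P y - P x) := by
      rw [show P x - P y = -(P y - P x) by abel, inner_neg_right]
    have a2 : (inner ℝ (P y - y) (P x - P y) : ℝ) = - inner ℝ (y - P y) (P x - P y) := by
      rw [show P y - y = -(y - P y) by abel, inner_neg_left]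
    have a3 : (inner ℝ (P x - P y) (P x - P y) : ℝ) = ‖P x - P y‖ ^ 2 :=
      real_inner_self_eq_norm_sq _
    rw [a1, a2, a3]
    linarith
  have hcs := real_inner_le_norm (x - y) (P x - P y)
  nlinarith [norm_nonneg (P x - P y), norm_nonneg (x - y)]

/-- `rate` is antitone in the distance to `g`. -/
lemma rate_mono (B γ H : ℝ) (hB : 0 < B) (hγ : 0 < γ) (hH : 0 < H)
    (g x y : EuclideanSpace ℝ (Fin 2)) (h : ‖x - g‖ ≤ ‖y - g‖) :
    rate B γ H g y ≤ rate B γ H g x := by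
  unfold rate
  have hx : (0:ℝ) < ‖x - g‖ ^ 2 + H ^ 2 := by positivity
  have hy : (0:ℝ) < ‖y - g‖ ^ 2 + H ^ 2 := by positivity
  have hd : ‖x - g‖ ^ 2 + H ^ 2 ≤ ‖y - g‖ ^ 2 + H ^ 2 := by
    nlinarith [norm_nonneg (x - g), norm_nonneg (y - g)]
  have hdiv : γ / (‖y - g‖ ^ 2 + H ^ 2) ≤ γ / (‖x - g‖ ^ 2 + H ^ 2) :=
    div_le_div_of_nonneg_left hγ.le hx hd
  have hposy : (0:ℝ) < 1 + γ / (‖y - g‖ ^ 2 + H ^ 2) := by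
    have := div_pos hγ hy; linarith
  exact mul_le_mul_of_nonneg_left
    (Real.logb_le_logb_of_le one_lt_two hposy (by linarith)) hB.le

/-- `rate B γ H g` is continuous. -/
lemma rate_continuous (B γ H : ℝ) (hγ : 0 < γ) (hH : 0 < H)
    (g : EuclideanSpace ℝ (Fin 2)) : Continuous (rate B γ H g) := by
  have hden : ∀ x : E, (0:ℝ) < ‖x - g‖ ^ 2 + H ^ 2 := fun x => by positivity
  have hc1 : Continuous fun x : E => ‖x - g‖ ^ 2 + H ^ 2 := by continuity
  have hc2 : Continuous fun x : E => 1 + γ / (‖x - g‖ ^ 2 + H ^ 2) :=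
    continuous_const.add (continuous_const.div hc1 fun x => (hden x).ne')
  have hpos : ∀ x : E, (0:ℝ) < 1 + γ / (‖x - g‖ ^ 2 + H ^ 2) := fun x => by
    have := div_pos hγ (hden x); linarith
  unfold rate Real.logb
  exact continuous_const.mul ((hc2.log fun x => (hpos x).ne').div_const _)

/-- **Proposition 1.** For any admissible trajectory of duration `T` from `a` to `b`, there
exists an admissible trajectory of the same duration from `a` to `b` that stays within the
triangle (convex hull) with vertices `a`, `g`, `b` and transmits at least as much information. -/
theorem prop1_triangle_path
    (g a b : EuclideanSpace ℝ (Fin 2)) (B γ H Vmax : ℝ)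
    (hB : 0 < B) (hγ : 0 < γ) (hH : 0 < H) (hV : 0 < Vmax)
    (T : ℝ) (hT : 0 ≤ T) (u : ℝ → EuclideanSpace ℝ (Fin 2))
    (hu : LipschitzOnWith (Real.toNNReal Vmax) u (Set.Icc 0 T))
    (hu0 : u 0 = a) (huT : u T = b) :
    ∃ u' : ℝ → EuclideanSpace ℝ (Fin 2),
      LipschitzOnWith (Real.toNNReal Vmax) u' (Set.Icc 0 T) ∧
      u' 0 = a ∧ u' T = b ∧
      (∀ t ∈ Set.Icc (0 : ℝ) T, u' t ∈ convexHull ℝ ({a, g, b} : Set (EuclideanSpace ℝ (Fin 2)))) ∧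
      (∫ t in (0 : ℝ)..T, rate B γ H g (u t)) ≤ ∫ t in (0 : ℝ)..T, rate B γ H g (u' t) := by
  set K : Set E := convexHull ℝ ({a, g, b} : Set E) with hKdef
  have hKconv : Convex ℝ K := convex_convexHull ℝ _
  have hfin : ({a, g, b} : Set E).Finite := by
    exact (Set.finite_singleton b).insert g |>.insert a
  have hKclosed : IsClosed K := (hfin.isCompact_convexHull (𝕜 := ℝ)).isClosed
  have haK : a ∈ K := subset_convexHull ℝ _ (by simp)
  have hgK : g ∈ K := subset_convexHull ℝ _ (by simp)
  have hbK : b ∈ K := subset_convexHull ℝ _ (by simp)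
  obtain ⟨P, hPmem, hPfix, hPlip⟩ := exists_proj_map K hKconv hKclosed ⟨a, haK⟩
  refine ⟨P ∘ u, ?_, ?_, ?_, ?_, ?_⟩
  · have := (hPlip.comp_lipschitzOnWith hu)
    simpa using this
  · simp [hu0, hPfix a haK]
  · simp [huT, hPfix b hbK]
  · intro t _; exact hPmem (u t)
  · have hdist : ∀ t, ‖P (u t) - g‖ ≤ ‖u t - g‖ := by
      intro t
      have := hPlip.dist_le_mul (u t) g
      simpa [hPfix g hgK, dist_eq_norm] using this
    have hmono : ∀ t ∈ Set.Icc (0:ℝ) T,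
        rate B γ H g (u t) ≤ rate B γ H g ((P ∘ u) t) := fun t _ =>
      rate_mono B γ H hB hγ hH g (P (u t)) (u t) (hdist t)
    have hc := rate_continuous B γ H hγ hH g
    have hcu : ContinuousOn (fun t => rate B γ H g (u t)) (Set.Icc 0 T) :=
      hc.comp_continuousOn hu.continuousOn
    have hcu' : ContinuousOn (fun t => rate B γ H g ((P ∘ u) t)) (Set.Icc 0 T) :=
      hc.comp_continuousOn (hPlip.continuous.comp_continuousOn hu.continuousOn)
    have hi1 : IntervalIntegrable (fun t => rate B γ H g (u t))
        MeasureTheory.volume 0 T := by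
      apply ContinuousOn.intervalIntegrable
      rwa [Set.uIcc_of_le hT]
    have hi2 : IntervalIntegrable (fun t => rate B γ H g ((P ∘ u) t))
        MeasureTheory.volume 0 T := by
      apply ContinuousOn.intervalIntegrable
      rwa [Set.uIcc_of_le hT]
    exact intervalIntegral.integral_mono_on hT hi1 hi2 hmono
end

section
/- Let N be a positive integer and let D : Fin N → ℝ and C : Fin N → ℝ be nonnegative. Then the following are equivalent: (i) there exists a nonnegative allocation x : Fin N → Fin N → ℝ such that x j i = 0 whenever i < j (data collected at stage j can only be transmitted in stage j or later), ∑ᵢ x j i = D j for every j (all of target j's data is transmitted), and ∑ⱼ x j i ≤ C i for every i (the amount transmitted in stage i does not exceed its capacity); (ii) for every i ∈ Fin N, the tail-sum condition ∑_{j ≥ i} D j ≤ ∑_{j ≥ i} C j holds. (This is the paper's claim, proved by induction, that successful transmission of all collected information before mission completion is equivalent to constraint (4): for every i, the total transmittable volume in the i-th through N-th transmission stages is at least the total collected volume in the i-th through N-th collection stages.) -/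
set_option maxRecDepth 10000 in
open Finset in
/-- clamp identity: overlap length of `[a,b] ∩ [p,q]` as a difference of clamps. -/
lemma clamp_overlap (p q a b : ℝ) (hpq : p ≤ q) (hab : a ≤ b) :
    max 0 (min q b - max p a) = max p (min q b) - max p (min q a) := by
  simp only [max_def, min_def]
  split_ifs <;> linarith

open Finset in
lemma tailSum_succ (N : ℕ) (f : Fin N → ℝ) (n : ℕ) (h : n < N) :
    ∑ k ∈ univ.filter (fun k : Fin N => n ≤ (k : ℕ)), f k
      = f ⟨n, h⟩ + ∑ k ∈ univ.filter (fun k : Fin N => n + 1 ≤ (k : ℕ)), f k := by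
  have hins : univ.filter (fun k : Fin N => n ≤ (k : ℕ))
      = insert ⟨n, h⟩ (univ.filter (fun k : Fin N => n + 1 ≤ (k : ℕ))) := by
    ext k
    simp only [mem_filter, mem_univ, true_and, mem_insert, Fin.ext_iff]
    omega
  rw [hins, Finset.sum_insert]
  simp

open Finset in
lemma tailSum_mono (N : ℕ) (f : Fin N → ℝ) (hf : ∀ k, 0 ≤ f k) {m n : ℕ} (hmn : m ≤ n) :
    ∑ k ∈ univ.filter (fun k : Fin N => n ≤ (k : ℕ)), f k
      ≤ ∑ k ∈ univ.filter (fun k : Fin N => m ≤ (k : ℕ)), f k := by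
  apply Finset.sum_le_sum_of_subset_of_nonneg
  · intro k hk
    simp only [mem_filter, mem_univ, true_and] at hk ⊢
    omega
  · intro k _ _
    exact hf k

open Finset in
lemma tailSum_of_ge (N : ℕ) (f : Fin N → ℝ) {n : ℕ} (h : N ≤ n) :
    ∑ k ∈ univ.filter (fun k : Fin N => n ≤ (k : ℕ)), f k = 0 := by
  apply Finset.sum_eq_zero
  intro k hk
  simp only [mem_filter, mem_univ, true_and] at hk
  exact absurd (lt_of_lt_of_le k.isLt (le_trans h hk)) (lt_irrefl _)

open Finset in
lemma tailSum_nonneg (N : ℕ) (f : Fin N → ℝ) (hf : ∀ k, 0 ≤ f k) (n : ℕ) :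
    0 ≤ ∑ k ∈ univ.filter (fun k : Fin N => n ≤ (k : ℕ)), f k :=
  Finset.sum_nonneg fun k _ => hf k

open Finset in
/-- Successful transmission of all collected data before mission completion (existence of a
causal, demand-meeting, capacity-respecting allocation) is equivalent to the tail-sum
condition (4): for every stage `i`, the total capacity of stages `i, …, N` is at least the
total data collected at stages `i, …, N`. -/
theorem transmission_feasibility_iff_tail_sums
    (N : ℕ) (hN : 0 < N) (D C : Fin N → ℝ)
    (hD : ∀ j, 0 ≤ D j) (hC : ∀ i, 0 ≤ C i) :
    (∃ x : Fin N → Fin N → ℝ,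
        (∀ j i, 0 ≤ x j i) ∧
        (∀ j i, i < j → x j i = 0) ∧
        (∀ j, ∑ i, x j i = D j) ∧
        (∀ i, ∑ j, x j i ≤ C i)) ↔
    (∀ i : Fin N,
        ∑ j ∈ univ.filter (fun j => i ≤ j), D j ≤ ∑ j ∈ univ.filter (fun j => i ≤ j), C j) := by
  -- tail sums indexed by ℕ
  set TD : ℕ → ℝ := fun n => ∑ k ∈ univ.filter (fun k : Fin N => n ≤ (k : ℕ)), D k with hTD
  set TC : ℕ → ℝ := fun n => ∑ k ∈ univ.filter (fun k : Fin N => n ≤ (k : ℕ)), C k with hTC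
  have hfilter : ∀ i : Fin N,
      (univ.filter (fun j : Fin N => i ≤ j)) = (univ.filter (fun j : Fin N => (i : ℕ) ≤ (j : ℕ))) := by
    intro i; apply Finset.filter_congr; intro j _; exact Fin.le_def
  constructor
  · -- forward direction
    rintro ⟨x, hx0, hxc, hxrow, hxcol⟩ i
    calc ∑ j ∈ univ.filter (fun j => i ≤ j), D j
        = ∑ j ∈ univ.filter (fun j => i ≤ j), ∑ k ∈ univ.filter (fun k => i ≤ k), x j k := by
          apply Finset.sum_congr rfl
          intro j hj
          simp only [mem_filter, mem_univ, true_and] at hj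
          rw [← hxrow j]
          rw [Finset.sum_filter]
          apply Finset.sum_congr rfl
          intro k _
          by_cases h : i ≤ k
          · simp [h]
          · simp only [h, if_false]
            exact hxc j k (lt_of_lt_of_le (lt_of_not_ge h) hj)
      _ = ∑ k ∈ univ.filter (fun k => i ≤ k), ∑ j ∈ univ.filter (fun j => i ≤ j), x j k :=
          Finset.sum_comm
      _ ≤ ∑ k ∈ univ.filter (fun k => i ≤ k), C k := by
          apply Finset.sum_le_sum
          intro k _
          calc ∑ j ∈ univ.filter (fun j => i ≤ j), x j k
              ≤ ∑ j, x j k := by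
                apply Finset.sum_le_sum_of_subset_of_nonneg (Finset.filter_subset _ _)
                intro j _ _; exact hx0 j k
            _ ≤ C k := hxcol k
  · -- backward direction: explicit construction
    intro hyp
    -- tail condition for all natural numbers
    have htail : ∀ n : ℕ, TD n ≤ TC n := by
      intro n
      by_cases h : n < N
      · have := hyp ⟨n, h⟩
        rw [hfilter] at this
        exact this
      · simp only [hTD, hTC]
        rw [tailSum_of_ge N D (le_of_not_gt h), tailSum_of_ge N C (le_of_not_gt h)]
    have hTDmono : ∀ {m n : ℕ}, m ≤ n → TD n ≤ TD m := fun hmn => tailSum_mono N D hD hmn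
    have hTCmono : ∀ {m n : ℕ}, m ≤ n → TC n ≤ TC m := fun hmn => tailSum_mono N C hC hmn
    have hTD0 : ∀ n, 0 ≤ TD n := tailSum_nonneg N D hD
    have hTC0 : ∀ n, 0 ≤ TC n := tailSum_nonneg N C hC
    have hTDN : TD N = 0 := tailSum_of_ge N D le_rfl
    have hTCN : TC N = 0 := tailSum_of_ge N C le_rfl
    have hTDsucc : ∀ j : Fin N, TD (j : ℕ) = D j + TD ((j : ℕ) + 1) := by
      intro j; exact tailSum_succ N D j j.isLt
    have hTCsucc : ∀ i : Fin N, TC (i : ℕ) = C i + TC ((i : ℕ) + 1) := by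
      intro i; exact tailSum_succ N C i i.isLt
    refine ⟨fun j i => max 0 (min (TD j) (TC i) - max (TD ((j : ℕ) + 1)) (TC ((i : ℕ) + 1))),
      fun j i => le_max_left _ _, ?_, ?_, ?_⟩
    · -- causality
      intro j i hij
      have hij' : (i : ℕ) < (j : ℕ) := hij
      have h1 : TD (j : ℕ) ≤ TC ((i : ℕ) + 1) :=
        le_trans (hTDmono hij') (htail _)
      have : min (TD (j : ℕ)) (TC (i : ℕ)) - max (TD ((j : ℕ) + 1)) (TC ((i : ℕ) + 1)) ≤ 0 := by
        have := min_le_left (TD (j : ℕ)) (TC (i : ℕ))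
        have := le_max_right (TD ((j : ℕ) + 1)) (TC ((i : ℕ) + 1))
        linarith
      exact max_eq_left this
    · -- row sums
      intro j
      have key : ∀ i : Fin N,
          max 0 (min (TD (j : ℕ)) (TC (i : ℕ)) - max (TD ((j : ℕ) + 1)) (TC ((i : ℕ) + 1)))
            = max (TD ((j : ℕ) + 1)) (min (TD (j : ℕ)) (TC (i : ℕ)))
              - max (TD ((j : ℕ) + 1)) (min (TD (j : ℕ)) (TC ((i : ℕ) + 1))) := by
        intro i
        have hab : TD ((j : ℕ) + 1) ≤ TD (j : ℕ) := hTDmono (Nat.le_succ _)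
        have hpq : TC ((i : ℕ) + 1) ≤ TC (i : ℕ) := hTCmono (Nat.le_succ _)
        exact clamp_overlap (TD ((j : ℕ) + 1)) (TD (j : ℕ)) (TC ((i : ℕ) + 1)) (TC (i : ℕ)) hab hpq
      calc ∑ i : Fin N, max 0 (min (TD (j : ℕ)) (TC (i : ℕ)) - max (TD ((j : ℕ) + 1)) (TC ((i : ℕ) + 1)))
          = ∑ i : Fin N, (max (TD ((j : ℕ) + 1)) (min (TD (j : ℕ)) (TC (i : ℕ)))
              - max (TD ((j : ℕ) + 1)) (min (TD (j : ℕ)) (TC ((i : ℕ) + 1)))) := by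
            exact Finset.sum_congr rfl fun i _ => key i
        _ = max (TD ((j : ℕ) + 1)) (min (TD (j : ℕ)) (TC 0))
              - max (TD ((j : ℕ) + 1)) (min (TD (j : ℕ)) (TC N)) := by
            rw [Fin.sum_univ_eq_sum_range
              (fun n => max (TD ((j : ℕ) + 1)) (min (TD (j : ℕ)) (TC n))
                - max (TD ((j : ℕ) + 1)) (min (TD (j : ℕ)) (TC (n + 1))))]
            exact Finset.sum_range_sub' _ N
        _ = D j := by
            have h1 : min (TD (j : ℕ)) (TC 0) = TD (j : ℕ) :=
              min_eq_left (le_trans (hTDmono (Nat.zero_le _)) (htail 0))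
            have h2 : max (TD ((j : ℕ) + 1)) (TD (j : ℕ)) = TD (j : ℕ) :=
              max_eq_right (hTDmono (Nat.le_succ _))
            have h3 : min (TD (j : ℕ)) (TC N) = 0 := by
              rw [hTCN]; exact min_eq_right (hTD0 _)
            have h4 : max (TD ((j : ℕ) + 1)) (0 : ℝ) = TD ((j : ℕ) + 1) :=
              max_eq_left (hTD0 _)
            rw [h1, h2, h3, h4]
            have := hTDsucc j
            linarith
    · -- column sums
      intro i
      have key : ∀ j : Fin N,
          max 0 (min (TD (j : ℕ)) (TC (i : ℕ)) - max (TD ((j : ℕ) + 1)) (TC ((i : ℕ) + 1)))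
            = max (TC ((i : ℕ) + 1)) (min (TC (i : ℕ)) (TD (j : ℕ)))
              - max (TC ((i : ℕ) + 1)) (min (TC (i : ℕ)) (TD ((j : ℕ) + 1))) := by
        intro j
        have hab : TD ((j : ℕ) + 1) ≤ TD (j : ℕ) := hTDmono (Nat.le_succ _)
        have hpq : TC ((i : ℕ) + 1) ≤ TC (i : ℕ) := hTCmono (Nat.le_succ _)
        rw [min_comm (TD (j : ℕ)) (TC (i : ℕ)), max_comm (TD ((j : ℕ) + 1)) (TC ((i : ℕ) + 1))]
        exact clamp_overlap _ _ _ _ hpq hab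
      calc ∑ j : Fin N, max 0 (min (TD (j : ℕ)) (TC (i : ℕ)) - max (TD ((j : ℕ) + 1)) (TC ((i : ℕ) + 1)))
          = ∑ j : Fin N, (max (TC ((i : ℕ) + 1)) (min (TC (i : ℕ)) (TD (j : ℕ)))
              - max (TC ((i : ℕ) + 1)) (min (TC (i : ℕ)) (TD ((j : ℕ) + 1)))) := by
            exact Finset.sum_congr rfl fun j _ => key j
        _ = max (TC ((i : ℕ) + 1)) (min (TC (i : ℕ)) (TD 0))
              - max (TC ((i : ℕ) + 1)) (min (TC (i : ℕ)) (TD N)) := by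
            rw [Fin.sum_univ_eq_sum_range
              (fun n => max (TC ((i : ℕ) + 1)) (min (TC (i : ℕ)) (TD n))
                - max (TC ((i : ℕ) + 1)) (min (TC (i : ℕ)) (TD (n + 1))))]
            exact Finset.sum_range_sub' _ N
        _ ≤ C i := by
            have h1 : max (TC ((i : ℕ) + 1)) (min (TC (i : ℕ)) (TD 0)) ≤ TC (i : ℕ) :=
              max_le (hTCmono (Nat.le_succ _)) (min_le_left _ _)
            have h2 : max (TC ((i : ℕ) + 1)) (min (TC (i : ℕ)) (TD N)) = TC ((i : ℕ) + 1) := by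
              rw [hTDN, min_eq_right (hTC0 _)]
              exact max_eq_left (hTC0 _)
            have := hTCsucc i
            rw [h2]
            linarith
end

section
/- Let g ∈ ℝ², H > 0, B > 0, γ > 0, V_max > 0 and R(u) = B · log₂(1 + γ / (‖u − g‖² + H²)). Fix a, c ∈ ℝ² with a ≠ g and with c not lying on the closed segment joining a and g. For s ∈ [0, 1] let b(s) = a + s(g − a), T₁(s) = s‖g − a‖/V_max, T₂(s) = ‖c − b(s)‖/V_max, and D_B(s) = ∫₀^{T₁(s)} R(a + V_max · t · (g − a)/‖g − a‖) dt + ∫₀^{T₂(s)} R(b(s) + V_max · t · (c − b(s))/‖c − b(s)‖) dt. Then D_B is monotone nondecreasing on [0, 1]: as the turning point b(s) moves from a toward g, the transmitted information volume of the time/rate-balanced trajectory does not decrease. -/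
open Real Set intervalIntegral
open scoped InnerProductSpace
open scoped RealInnerProductSpace

namespace BalancedAux

abbrev E2 := EuclideanSpace ℝ (Fin 2)

lemma rate_pos {B γ H : ℝ} (hB : 0 < B) (hγ : 0 < γ) (hH : 0 < H) (g u : E2) :
    0 < rate B γ H g u := by
  have hd : 0 < ‖u - g‖ ^ 2 + H ^ 2 := by positivity
  have : 0 < γ / (‖u - g‖ ^ 2 + H ^ 2) := div_pos hγ hd
  exact mul_pos hB (Real.logb_pos one_lt_two (by linarith))

lemma rate_anti {B γ H : ℝ} (hB : 0 < B) (hγ : 0 < γ) (hH : 0 < H) (g : E2) (u v : E2)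
    (h : ‖u - g‖ ≤ ‖v - g‖) : rate B γ H g v ≤ rate B γ H g u := by
  have hdu : 0 < ‖u - g‖ ^ 2 + H ^ 2 := by positivity
  have hdv : 0 < ‖v - g‖ ^ 2 + H ^ 2 := by positivity
  unfold rate
  have h2 : ‖u - g‖ ^ 2 + H ^ 2 ≤ ‖v - g‖ ^ 2 + H ^ 2 := by
    have := pow_le_pow_left₀ (norm_nonneg (u - g)) h 2
    linarith
  apply mul_le_mul_of_nonneg_left _ hB.le
  apply Real.logb_le_logb_of_le one_lt_two (by positivity)
  gcongr

lemma rate_cont {B γ H : ℝ} (hγ : 0 < γ) (hH : 0 < H) (g : E2) :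
    Continuous fun u : E2 => rate B γ H g u := by
  have hd : ∀ u : E2, 0 < ‖u - g‖ ^ 2 + H ^ 2 := fun u => by positivity
  have h1 : Continuous fun u : E2 => 1 + γ / (‖u - g‖ ^ 2 + H ^ 2) := by
    apply continuous_const.add
    exact continuous_const.div (by fun_prop) fun u => (hd u).ne'
  have h2 : ∀ u : E2, (1 : ℝ) + γ / (‖u - g‖ ^ 2 + H ^ 2) ≠ 0 := by
    intro u
    have : 0 < γ / (‖u - g‖ ^ 2 + H ^ 2) := div_pos hγ (hd u)
    positivity
  simp only [rate, Real.logb]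
  exact continuous_const.mul ((h1.log h2).div_const _)

lemma key_inner (u v : E2) {σ : ℝ} (h0 : 0 ≤ σ) (h1 : σ ≤ 1) :
    ⟪v, u⟫ * ‖(1 - σ) • v + σ • u‖ ≤ ⟪(1 - σ) • v + σ • u, u⟫ * ‖v‖ := by
  have hcs := abs_real_inner_le_norm v u
  have hexp : ⟪(1 - σ) • v + σ • u, u⟫ = (1 - σ) * ⟪v, u⟫ + σ * ‖u‖ ^ 2 := by
    rw [inner_add_left, real_inner_smul_left, real_inner_smul_left, real_inner_self_eq_norm_sq]
  have hub : ‖(1 - σ) • v + σ • u‖ ≤ (1 - σ) * ‖v‖ + σ * ‖u‖ := by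
    calc ‖(1 - σ) • v + σ • u‖ ≤ ‖(1 - σ) • v‖ + ‖σ • u‖ := norm_add_le _ _
      _ = (1 - σ) * ‖v‖ + σ * ‖u‖ := by
          rw [norm_smul, norm_smul, Real.norm_eq_abs, Real.norm_eq_abs,
            abs_of_nonneg (by linarith : (0:ℝ) ≤ 1 - σ), abs_of_nonneg h0]
  have hlb : (1 - σ) * ‖v‖ - σ * ‖u‖ ≤ ‖(1 - σ) • v + σ • u‖ := by
    have h3 : ‖(1 - σ) • v‖ ≤ ‖(1 - σ) • v + σ • u‖ + ‖σ • u‖ := by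
      have := norm_add_le ((1 - σ) • v + σ • u) (-(σ • u))
      simpa using this
    rw [norm_smul, norm_smul, Real.norm_eq_abs, Real.norm_eq_abs,
      abs_of_nonneg (by linarith : (0:ℝ) ≤ 1 - σ), abs_of_nonneg h0] at h3
    linarith
  rw [hexp]
  rcases le_or_gt 0 (⟪v, u⟫) with h | h
  · nlinarith [mul_le_mul_of_nonneg_left hub h,
      mul_nonneg (mul_nonneg h0 (norm_nonneg u)) (sub_nonneg.mpr (abs_le.mp hcs).2)]
  · nlinarith [mul_nonneg (sub_nonneg.mpr hlb) (neg_nonneg.mpr h.le),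
      mul_nonneg (mul_nonneg h0 (norm_nonneg u))
        (by linarith [(abs_le.mp hcs).1] : (0:ℝ) ≤ ‖v‖ * ‖u‖ + ⟪v, u⟫)]

lemma dist_comp (g c b b' : E2) {σ r : ℝ}
    (hb' : b' - c = (1 - σ) • (b - c) + σ • (g - c))
    (h0 : 0 ≤ σ) (h1 : σ ≤ 1) (hr : 0 ≤ r)
    (hcb : 0 < ‖c - b‖) (hcb' : 0 < ‖c - b'‖) :
    ‖c + (r / ‖c - b'‖) • (b' - c) - g‖ ≤ ‖c + (r / ‖c - b‖) • (b - c) - g‖ := by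
  have hkey : ⟪b - c, g - c⟫ * ‖c - b'‖ ≤ ⟪b' - c, g - c⟫ * ‖c - b‖ := by
    rw [norm_sub_rev c b', norm_sub_rev c b, hb']
    exact key_inner (g - c) (b - c) h0 h1
  have hpt : ∀ (q : ℝ) (p : E2), c + q • p - g = q • p - (g - c) := by
    intro q p; module
  rw [hpt, hpt]
  have hsq : ∀ (b₀ : E2), 0 < ‖c - b₀‖ →
      ‖(r / ‖c - b₀‖) • (b₀ - c) - (g - c)‖ ^ 2
        = r ^ 2 - 2 * (r / ‖c - b₀‖ * ⟪b₀ - c, g - c⟫) + ‖g - c‖ ^ 2 := by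
    intro b₀ hb₀
    rw [norm_sub_sq_real, norm_smul, real_inner_smul_left, Real.norm_eq_abs,
      abs_of_nonneg (div_nonneg hr hb₀.le), norm_sub_rev b₀ c]
    rw [div_mul_cancel₀ r hb₀.ne']
  have hmono : r / ‖c - b‖ * ⟪b - c, g - c⟫ ≤ r / ‖c - b'‖ * ⟪b' - c, g - c⟫ := by
    rw [div_mul_eq_mul_div, div_mul_eq_mul_div, div_le_div_iff₀ hcb hcb']
    nlinarith [mul_le_mul_of_nonneg_left hkey hr]
  have h2 : ‖(r / ‖c - b'‖) • (b' - c) - (g - c)‖ ^ 2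
      ≤ ‖(r / ‖c - b‖) • (b - c) - (g - c)‖ ^ 2 := by
    rw [hsq b hcb, hsq b' hcb']
    linarith
  have := Real.sqrt_le_sqrt h2
  rwa [Real.sqrt_sq (norm_nonneg _), Real.sqrt_sq (norm_nonneg _)] at this

/-- The rate along the reversed two-leg path, parametrized by time-to-go from `c`:
first along the segment from `c` to `b s = a + s • (g - a)`, then continuing from `b s`
back toward `a` along the line through `a` and `g`. -/
noncomputable def Gpath (B γ H Vmax : ℝ) (g a c : E2) (s t : ℝ) : ℝ :=
  if Vmax * t ≤ ‖c - (a + s • (g - a))‖ then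
    rate B γ H g (c + (Vmax * t / ‖c - (a + s • (g - a))‖) • ((a + s • (g - a)) - c))
  else
    rate B γ H g
      ((a + s • (g - a)) - ((Vmax * t - ‖c - (a + s • (g - a))‖) / ‖g - a‖) • (g - a))

lemma Gpath_cont {B γ H Vmax : ℝ} (hγ : 0 < γ) (hH : 0 < H)
    (g a c : E2) (s : ℝ) (hR : 0 < ‖c - (a + s • (g - a))‖) :
    Continuous (Gpath B γ H Vmax g a c s) := by
  unfold Gpath
  apply Continuous.if_le
  · exact (rate_cont hγ hH g).comp (by fun_prop)
  · exact (rate_cont hγ hH g).comp (by fun_prop)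
  · fun_prop
  · exact continuous_const
  · intro t ht
    congr 1
    rw [ht, div_self hR.ne', one_smul, sub_self, zero_div, zero_smul, sub_zero]
    abel

lemma Gpath_nonneg {B γ H Vmax : ℝ} (hB : 0 < B) (hγ : 0 < γ) (hH : 0 < H)
    (g a c : E2) (s t : ℝ) : 0 ≤ Gpath B γ H Vmax g a c s t := by
  unfold Gpath
  split_ifs <;> exact (rate_pos hB hγ hH g _).le


lemma Gpath_mono {B γ H Vmax : ℝ} (g a c : E2) (hB : 0 < B) (hγ : 0 < γ) (hH : 0 < H)
    (hV : 0 < Vmax) (hL : 0 < ‖g - a‖) {s s' t : ℝ}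
    (hs0 : 0 ≤ s) (hss' : s ≤ s') (hs1 : s' ≤ 1)
    (hR : 0 < ‖c - (a + s • (g - a))‖) (hR' : 0 < ‖c - (a + s' • (g - a))‖)
    (ht : 0 ≤ t) :
    Gpath B γ H Vmax g a c s t ≤ Gpath B γ H Vmax g a c s' t := by
  rcases hss'.eq_or_lt with rfl | hlt
  · exact le_refl _
  have hs1' : s < 1 := lt_of_lt_of_le hlt hs1
  simp only [Gpath]
  set b := a + s • (g - a) with hbdef
  set b' := a + s' • (g - a) with hb'def
  -- basic norm identities
  have hbg : ‖b - g‖ = (1 - s) * ‖g - a‖ := by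
    have h1 : b - g = (-(1 - s)) • (g - a) := by rw [hbdef]; module
    rw [h1, norm_smul, Real.norm_eq_abs, abs_neg, abs_of_nonneg (by linarith : (0:ℝ) ≤ 1 - s)]
  have hbg' : ‖b' - g‖ = (1 - s') * ‖g - a‖ := by
    have h1 : b' - g = (-(1 - s')) • (g - a) := by rw [hb'def]; module
    rw [h1, norm_smul, Real.norm_eq_abs, abs_neg, abs_of_nonneg (by linarith : (0:ℝ) ≤ 1 - s')]
  have hbb' : ‖b' - b‖ = (s' - s) * ‖g - a‖ := by
    have h1 : b' - b = (s' - s) • (g - a) := by rw [hbdef, hb'def]; module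
    rw [h1, norm_smul, Real.norm_eq_abs, abs_of_nonneg (by linarith : (0:ℝ) ≤ s' - s)]
  have htri1 : ‖c - b'‖ ≤ ‖c - b‖ + (s' - s) * ‖g - a‖ := by
    calc ‖c - b'‖ = ‖(c - b) + (b - b')‖ := by rw [sub_add_sub_cancel]
      _ ≤ ‖c - b‖ + ‖b - b'‖ := norm_add_le _ _
      _ = ‖c - b‖ + (s' - s) * ‖g - a‖ := by rw [norm_sub_rev b b', hbb']
  have htri2 : ‖c - b‖ ≤ ‖c - b'‖ + (s' - s) * ‖g - a‖ := by
    calc ‖c - b‖ = ‖(c - b') + (b' - b)‖ := by rw [sub_add_sub_cancel]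
      _ ≤ ‖c - b'‖ + ‖b' - b‖ := norm_add_le _ _
      _ = ‖c - b'‖ + (s' - s) * ‖g - a‖ := by rw [hbb']
  -- distance formula on the second (line) branch
  have helse : ∀ (σ : ℝ) (p : E2) (δ : ℝ), p = a + σ • (g - a) → σ ≤ 1 → 0 ≤ δ →
      ‖p - (δ / ‖g - a‖) • (g - a) - g‖ = (1 - σ) * ‖g - a‖ + δ := by
    intro σ p δ hp hσ hδ
    have h1 : p - (δ / ‖g - a‖) • (g - a) - g = (-((1 - σ) + δ / ‖g - a‖)) • (g - a) := by
      rw [hp]; module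
    rw [h1, norm_smul, Real.norm_eq_abs, abs_neg,
      abs_of_nonneg (by
        have := div_nonneg hδ (norm_nonneg (g - a))
        linarith)]
    field_simp
  split_ifs with h1 h2 h2
  -- Case 1: both on the `[c, ·]` legs
  · apply rate_anti hB hγ hH
    have h1s : (0:ℝ) < 1 - s := by linarith
    have hm : (1 - s) • (b' - c) = (1 - s') • (b - c) + (s' - s) • (g - c) := by
      rw [hbdef, hb'def]; module
    have hbc' : b' - c = (1 - (s' - s) / (1 - s)) • (b - c) + ((s' - s) / (1 - s)) • (g - c) := by
      have hcoef : 1 - (s' - s) / (1 - s) = (1 - s') / (1 - s) := by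
        field_simp
        ring
      rw [hcoef]
      calc b' - c = ((1 - s)⁻¹ * (1 - s)) • (b' - c) := by
            rw [inv_mul_cancel₀ h1s.ne', one_smul]
        _ = (1 - s)⁻¹ • ((1 - s) • (b' - c)) := by rw [smul_smul]
        _ = (1 - s)⁻¹ • ((1 - s') • (b - c) + (s' - s) • (g - c)) := by rw [hm]
        _ = ((1 - s') / (1 - s)) • (b - c) + ((s' - s) / (1 - s)) • (g - c) := by
            rw [smul_add, smul_smul, smul_smul, div_eq_inv_mul, div_eq_inv_mul]
    exact dist_comp g c b b' hbc' (div_nonneg (by linarith) (by linarith))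
      (by rw [div_le_one h1s]; linarith) (by positivity) hR hR'
  -- Case 3: old still on `[c,b]`, new on the line extension
  · apply rate_anti hB hγ hH
    push_neg at h2
    have hend : ‖b - (c + (Vmax * t / ‖c - b‖) • (b - c))‖ = ‖c - b‖ - Vmax * t := by
      have hx : b - (c + (Vmax * t / ‖c - b‖) • (b - c))
          = (1 - Vmax * t / ‖c - b‖) • (b - c) := by module
      rw [hx, norm_smul, Real.norm_eq_abs,
        abs_of_nonneg (by
          have : Vmax * t / ‖c - b‖ ≤ 1 := by rw [div_le_one hR]; exact h1
          linarith), norm_sub_rev b c]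
      field_simp
    have htr : ‖b - g‖ ≤ ‖b - (c + (Vmax * t / ‖c - b‖) • (b - c))‖
        + ‖c + (Vmax * t / ‖c - b‖) • (b - c) - g‖ := by
      calc ‖b - g‖ = ‖(b - (c + (Vmax * t / ‖c - b‖) • (b - c)))
            + (c + (Vmax * t / ‖c - b‖) • (b - c) - g)‖ := by rw [sub_add_sub_cancel]
        _ ≤ _ := norm_add_le _ _
    rw [helse s' b' (Vmax * t - ‖c - b'‖) hb'def (by linarith) (by linarith)]
    rw [hend, hbg] at htr
    linarith
  -- Case 2: old on `[c,b]` extension (line), new still on `[c,b']`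
  · apply rate_anti hB hγ hH
    push_neg at h1
    have hrt : 0 ≤ Vmax * t := by positivity
    have hend : ‖c + (Vmax * t / ‖c - b'‖) • (b' - c) - b'‖ = ‖c - b'‖ - Vmax * t := by
      have hx : c + (Vmax * t / ‖c - b'‖) • (b' - c) - b'
          = (-((1 - Vmax * t / ‖c - b'‖))) • (b' - c) := by module
      rw [hx, norm_smul, Real.norm_eq_abs, abs_neg,
        abs_of_nonneg (by
          have : Vmax * t / ‖c - b'‖ ≤ 1 := by rw [div_le_one hR']; exact h2
          linarith), norm_sub_rev b' c]
      field_simp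
    have htr : ‖c + (Vmax * t / ‖c - b'‖) • (b' - c) - g‖
        ≤ ‖c + (Vmax * t / ‖c - b'‖) • (b' - c) - b'‖ + ‖b' - g‖ := by
      calc ‖c + (Vmax * t / ‖c - b'‖) • (b' - c) - g‖
          = ‖(c + (Vmax * t / ‖c - b'‖) • (b' - c) - b') + (b' - g)‖ := by
            rw [sub_add_sub_cancel]
        _ ≤ _ := norm_add_le _ _
    rw [helse s b (Vmax * t - ‖c - b‖) hbdef (by linarith) (by linarith)]
    rw [hend, hbg'] at htr
    linarith
  -- Case 4: both on the line extension
  · apply rate_anti hB hγ hH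
    push_neg at h1 h2
    rw [helse s b (Vmax * t - ‖c - b‖) hbdef (by linarith) (by linarith),
      helse s' b' (Vmax * t - ‖c - b'‖) hb'def (by linarith) (by linarith)]
    linarith


lemma integral_reflect (f : ℝ → ℝ) (T : ℝ) :
    ∫ t in (0:ℝ)..T, f (T - t) = ∫ t in (0:ℝ)..T, f t := by
  simpa using intervalIntegral.integral_comp_sub_left f T

lemma integral_shift (f : ℝ → ℝ) (T1 T2 : ℝ) :
    ∫ t in T2..(T2 + T1), f (t - T2) = ∫ t in (0:ℝ)..T1, f t := by
  simpa using intervalIntegral.integral_comp_sub_right (a := T2) (b := T2 + T1) f T2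

lemma leg2_eq {B γ H Vmax : ℝ} (g a c : E2) (hV : 0 < Vmax) {s : ℝ}
    (hR : 0 < ‖c - (a + s • (g - a))‖) :
    (∫ t in (0:ℝ)..(‖c - (a + s • (g - a))‖ / Vmax),
      rate B γ H g ((a + s • (g - a)) +
        (Vmax * t / ‖c - (a + s • (g - a))‖) • (c - (a + s • (g - a)))))
    = ∫ t in (0:ℝ)..(‖c - (a + s • (g - a))‖ / Vmax), Gpath B γ H Vmax g a c s t := by
  calc (∫ t in (0:ℝ)..(‖c - (a + s • (g - a))‖ / Vmax),
        rate B γ H g ((a + s • (g - a)) +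
          (Vmax * t / ‖c - (a + s • (g - a))‖) • (c - (a + s • (g - a)))))
      = ∫ t in (0:ℝ)..(‖c - (a + s • (g - a))‖ / Vmax),
        rate B γ H g ((a + s • (g - a)) +
          (Vmax * ((‖c - (a + s • (g - a))‖ / Vmax) - t) / ‖c - (a + s • (g - a))‖) •
            (c - (a + s • (g - a)))) :=
        (integral_reflect (fun t => rate B γ H g ((a + s • (g - a)) +
          (Vmax * t / ‖c - (a + s • (g - a))‖) • (c - (a + s • (g - a)))))
          (‖c - (a + s • (g - a))‖ / Vmax)).symm
    _ = ∫ t in (0:ℝ)..(‖c - (a + s • (g - a))‖ / Vmax), Gpath B γ H Vmax g a c s t := by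
        apply intervalIntegral.integral_congr
        intro t ht
        rw [Set.uIcc_of_le (div_nonneg (norm_nonneg _) hV.le)] at ht
        have hcond : Vmax * t ≤ ‖c - (a + s • (g - a))‖ := by
          have := (le_div_iff₀ hV).mp ht.2
          linarith [this]
        simp only [Gpath, if_pos hcond]
        congr 1
        have harg : Vmax * ((‖c - (a + s • (g - a))‖ / Vmax) - t)
            = ‖c - (a + s • (g - a))‖ - Vmax * t := by
          field_simp
        rw [harg, sub_div, div_self hR.ne']
        module

lemma leg1_eq {B γ H Vmax : ℝ} (g a c : E2) (hV : 0 < Vmax) (hL : 0 < ‖g - a‖) {s : ℝ}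
    (hs0 : 0 ≤ s) (hR : 0 < ‖c - (a + s • (g - a))‖) :
    (∫ t in (0:ℝ)..(s * ‖g - a‖ / Vmax),
      rate B γ H g (a + (Vmax * t / ‖g - a‖) • (g - a)))
    = ∫ t in (‖c - (a + s • (g - a))‖ / Vmax)..
        (‖c - (a + s • (g - a))‖ / Vmax + s * ‖g - a‖ / Vmax),
        Gpath B γ H Vmax g a c s t := by
  have e1 : Vmax * (s * ‖g - a‖ / Vmax) = s * ‖g - a‖ := by field_simp
  have e2 : Vmax * (‖c - (a + s • (g - a))‖ / Vmax) = ‖c - (a + s • (g - a))‖ := by field_simp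
  calc (∫ t in (0:ℝ)..(s * ‖g - a‖ / Vmax),
        rate B γ H g (a + (Vmax * t / ‖g - a‖) • (g - a)))
      = ∫ t in (0:ℝ)..(s * ‖g - a‖ / Vmax),
        rate B γ H g (a + (Vmax * ((s * ‖g - a‖ / Vmax) - t) / ‖g - a‖) • (g - a)) :=
        (integral_reflect (fun t => rate B γ H g (a + (Vmax * t / ‖g - a‖) • (g - a)))
          (s * ‖g - a‖ / Vmax)).symm
    _ = ∫ t in (‖c - (a + s • (g - a))‖ / Vmax)..
          (‖c - (a + s • (g - a))‖ / Vmax + s * ‖g - a‖ / Vmax),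
          rate B γ H g (a + (Vmax * ((s * ‖g - a‖ / Vmax) -
            (t - ‖c - (a + s • (g - a))‖ / Vmax)) / ‖g - a‖) • (g - a)) :=
        (integral_shift (fun t => rate B γ H g
          (a + (Vmax * ((s * ‖g - a‖ / Vmax) - t) / ‖g - a‖) • (g - a)))
          (s * ‖g - a‖ / Vmax) (‖c - (a + s • (g - a))‖ / Vmax)).symm
    _ = ∫ t in (‖c - (a + s • (g - a))‖ / Vmax)..
          (‖c - (a + s • (g - a))‖ / Vmax + s * ‖g - a‖ / Vmax),
          Gpath B γ H Vmax g a c s t := by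
        apply intervalIntegral.integral_congr
        intro t ht
        rw [Set.uIcc_of_le (le_add_of_nonneg_right
          (div_nonneg (mul_nonneg hs0 (norm_nonneg _)) hV.le))] at ht
        simp only [Gpath]
        by_cases hcond : Vmax * t ≤ ‖c - (a + s • (g - a))‖
        · have heq : Vmax * t = ‖c - (a + s • (g - a))‖ := by
            refine le_antisymm hcond ?_
            have := mul_le_mul_of_nonneg_left ht.1 hV.le
            rw [e2] at this
            exact this
          rw [if_pos hcond]
          congr 1
          have h1 : Vmax * t / ‖c - (a + s • (g - a))‖ = 1 := by
            rw [heq]; exact div_self hR.ne'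
          have h2 : Vmax * ((s * ‖g - a‖ / Vmax) - (t - ‖c - (a + s • (g - a))‖ / Vmax))
              = s * ‖g - a‖ := by
            rw [mul_sub, mul_sub, e1, e2, heq]; ring
          rw [h1, one_smul, h2, mul_div_assoc, div_self hL.ne', mul_one]
          abel
        · rw [if_neg hcond]
          congr 1
          have h2 : Vmax * ((s * ‖g - a‖ / Vmax) - (t - ‖c - (a + s • (g - a))‖ / Vmax))
              = s * ‖g - a‖ - (Vmax * t - ‖c - (a + s • (g - a))‖) := by
            rw [mul_sub, mul_sub, e1, e2]
          rw [h2, sub_div, mul_div_assoc, div_self hL.ne', mul_one]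
          module

lemma DB_eq {B γ H Vmax : ℝ} (g a c : E2) (hγ : 0 < γ) (hH : 0 < H) (hV : 0 < Vmax)
    (hL : 0 < ‖g - a‖) {s : ℝ} (hs0 : 0 ≤ s)
    (hR : 0 < ‖c - (a + s • (g - a))‖) :
    (∫ t in (0:ℝ)..(s * ‖g - a‖ / Vmax),
        rate B γ H g (a + (Vmax * t / ‖g - a‖) • (g - a))) +
    (∫ t in (0:ℝ)..(‖c - (a + s • (g - a))‖ / Vmax),
        rate B γ H g ((a + s • (g - a)) +
          (Vmax * t / ‖c - (a + s • (g - a))‖) • (c - (a + s • (g - a))))) =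
    ∫ t in (0:ℝ)..((‖c - (a + s • (g - a))‖ + s * ‖g - a‖) / Vmax),
      Gpath B γ H Vmax g a c s t := by
  rw [leg2_eq g a c hV hR, leg1_eq g a c hV hL hs0 hR, add_comm, add_div]
  exact intervalIntegral.integral_add_adjacent_intervals
    ((Gpath_cont hγ hH g a c s hR).intervalIntegrable _ _)
    ((Gpath_cont hγ hH g a c s hR).intervalIntegrable _ _)

end BalancedAux

/-- The transmitted volume `D_B(s)` of the time/rate-balanced trajectory is monotone
nondecreasing in `s` on `[0, 1]`: as the turning point `b(s) = a + s • (g − a)` moves from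
`a` toward `g`, the transmitted information volume does not decrease. -/
theorem balanced_volume_monotone
    (g a c : EuclideanSpace ℝ (Fin 2)) (B γ H Vmax : ℝ)
    (hB : 0 < B) (hγ : 0 < γ) (hH : 0 < H) (hV : 0 < Vmax)
    (hag : a ≠ g) (hc : c ∉ segment ℝ a g)
    (DB : ℝ → ℝ)
    (hDB : ∀ s : ℝ, DB s =
      (∫ t in (0 : ℝ)..(s * ‖g - a‖ / Vmax),
        rate B γ H g (a + (Vmax * t / ‖g - a‖) • (g - a))) +
      (∫ t in (0 : ℝ)..(‖c - (a + s • (g - a))‖ / Vmax),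
        rate B γ H g
          ((a + s • (g - a)) +
            (Vmax * t / ‖c - (a + s • (g - a))‖) • (c - (a + s • (g - a)))))) :
    MonotoneOn DB (Set.Icc (0 : ℝ) 1) := by
  intro x hx y hy hxy
  obtain ⟨hx0, hx1⟩ := hx
  obtain ⟨hy0, hy1⟩ := hy
  have hL : 0 < ‖g - a‖ := by
    rw [norm_pos_iff, sub_ne_zero]
    exact Ne.symm hag
  have hRpos : ∀ s : ℝ, 0 ≤ s → s ≤ 1 → 0 < ‖c - (a + s • (g - a))‖ := by
    intro s h0 h1
    rw [norm_pos_iff, sub_ne_zero]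
    intro hcb
    exact hc (by rw [segment_eq_image']; exact ⟨s, ⟨h0, h1⟩, hcb.symm⟩)
  have hRx := hRpos x hx0 hx1
  have hRy := hRpos y hy0 hy1
  rw [hDB x, hDB y, BalancedAux.DB_eq g a c hγ hH hV hL hx0 hRx,
    BalancedAux.DB_eq g a c hγ hH hV hL hy0 hRy]
  have hTx0 : (0:ℝ) ≤ (‖c - (a + x • (g - a))‖ + x * ‖g - a‖) / Vmax :=
    div_nonneg (add_nonneg (norm_nonneg _) (mul_nonneg hx0 (norm_nonneg _))) hV.le
  have hbb : (a + y • (g - a)) - (a + x • (g - a)) = (y - x) • (g - a) := by module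
  have htri : ‖c - (a + x • (g - a))‖ ≤ ‖c - (a + y • (g - a))‖ + (y - x) * ‖g - a‖ := by
    calc ‖c - (a + x • (g - a))‖
        = ‖(c - (a + y • (g - a))) + ((a + y • (g - a)) - (a + x • (g - a)))‖ := by
          rw [sub_add_sub_cancel]
      _ ≤ ‖c - (a + y • (g - a))‖ + ‖(a + y • (g - a)) - (a + x • (g - a))‖ := norm_add_le _ _
      _ = _ := by
          rw [hbb, norm_smul, Real.norm_eq_abs, abs_of_nonneg (by linarith : (0:ℝ) ≤ y - x)]
  have hT : (‖c - (a + x • (g - a))‖ + x * ‖g - a‖) / Vmax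
      ≤ (‖c - (a + y • (g - a))‖ + y * ‖g - a‖) / Vmax := by
    rw [div_le_div_iff_of_pos_right hV]
    nlinarith [htri, hL.le]
  have hix : IntervalIntegrable (BalancedAux.Gpath B γ H Vmax g a c x) MeasureTheory.volume
      0 ((‖c - (a + x • (g - a))‖ + x * ‖g - a‖) / Vmax) :=
    (BalancedAux.Gpath_cont hγ hH g a c x hRx).intervalIntegrable _ _
  have hiy1 : IntervalIntegrable (BalancedAux.Gpath B γ H Vmax g a c y) MeasureTheory.volume
      0 ((‖c - (a + x • (g - a))‖ + x * ‖g - a‖) / Vmax) :=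
    (BalancedAux.Gpath_cont hγ hH g a c y hRy).intervalIntegrable _ _
  have hiy2 : IntervalIntegrable (BalancedAux.Gpath B γ H Vmax g a c y) MeasureTheory.volume
      ((‖c - (a + x • (g - a))‖ + x * ‖g - a‖) / Vmax)
      ((‖c - (a + y • (g - a))‖ + y * ‖g - a‖) / Vmax) :=
    (BalancedAux.Gpath_cont hγ hH g a c y hRy).intervalIntegrable _ _
  calc (∫ t in (0:ℝ)..((‖c - (a + x • (g - a))‖ + x * ‖g - a‖) / Vmax),
        BalancedAux.Gpath B γ H Vmax g a c x t)
      ≤ ∫ t in (0:ℝ)..((‖c - (a + x • (g - a))‖ + x * ‖g - a‖) / Vmax),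
        BalancedAux.Gpath B γ H Vmax g a c y t := by
        apply intervalIntegral.integral_mono_on hTx0 hix hiy1
        intro t htt
        exact BalancedAux.Gpath_mono g a c hB hγ hH hV hL hx0 hxy hy1 hRx hRy htt.1
    _ ≤ ∫ t in (0:ℝ)..((‖c - (a + y • (g - a))‖ + y * ‖g - a‖) / Vmax),
        BalancedAux.Gpath B γ H Vmax g a c y t := by
        rw [← intervalIntegral.integral_add_adjacent_intervals hiy1 hiy2]
        have hnn : 0 ≤ ∫ t in ((‖c - (a + x • (g - a))‖ + x * ‖g - a‖) / Vmax)..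
            ((‖c - (a + y • (g - a))‖ + y * ‖g - a‖) / Vmax),
            BalancedAux.Gpath B γ H Vmax g a c y t :=
          intervalIntegral.integral_nonneg hT
            (fun u _ => BalancedAux.Gpath_nonneg hB hγ hH g a c y u)
        linarith
end
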